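/- Let 0 < ϱ₋ < ϱ₊, p₋, p₊ > 0, ϱ₁ > ϱ₊ and v₋ ∈ ℝ. Set R := ϱ₋ − ϱ₊ and, for u > 0, v₊ := v₋ − u, A := ϱ₋v₋ − ϱ₊v₊, B := ϱ₋ϱ₊u² − (ϱ₊ − ϱ₋)(p₊ − p₋), μ₀ := A/R − (1/R)·√(B(ϱ₁−ϱ₊)/(ϱ₁−ϱ₋)) and μ₁ := A/R − (1/R)·√(B(ϱ₁−ϱ₋)/(ϱ₁−ϱ₊)). Then there exists u₀ > 0 such that for all u ≥ u₀: B > 0, v₋ − μ₀ > 0 and μ₁ − v₊ > 0. -/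
import Mathlib


set_option maxHeartbeats 1000000
noncomputable section

/-- `B = ϱ₋ϱ₊u² − (ϱ₊ − ϱ₋)(p₊ − p₋)`. -/
def Bu (ϱm ϱp pm pp u : ℝ) : ℝ := ϱm * ϱp * u ^ 2 - (ϱp - ϱm) * (pp - pm)

/-- The left interface speed `μ₀ = A/R − (1/R)·√(B(ϱ₁−ϱ₊)/(ϱ₁−ϱ₋))`,
with `v₋` fixed and `v₊ = v₋ − u`. -/
def mu0u (ϱm ϱp pm pp ϱ1 vm u : ℝ) : ℝ :=
  (ϱm * vm - ϱp * (vm - u)) / (ϱm - ϱp) -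
    (1 / (ϱm - ϱp)) * Real.sqrt (Bu ϱm ϱp pm pp u * ((ϱ1 - ϱp) / (ϱ1 - ϱm)))

/-- The right interface speed `μ₁ = A/R − (1/R)·√(B(ϱ₁−ϱ₋)/(ϱ₁−ϱ₊))`,
with `v₋` fixed and `v₊ = v₋ − u`. -/
def mu1u (ϱm ϱp pm pp ϱ1 vm u : ℝ) : ℝ :=
  (ϱm * vm - ϱp * (vm - u)) / (ϱm - ϱp) -
    (1 / (ϱm - ϱp)) * Real.sqrt (Bu ϱm ϱp pm pp u * ((ϱ1 - ϱm) / (ϱ1 - ϱp)))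

/-- `Y = ϱ₁ϱ₊·(v₋+μ₀)/(v₋−μ₀) + ϱ₁ϱ₋·(μ₁+v₊)/(μ₁−v₊)`. -/
def Yu (ϱm ϱp pm pp ϱ1 vm u : ℝ) : ℝ :=
  ϱ1 * ϱp * ((vm + mu0u ϱm ϱp pm pp ϱ1 vm u) / (vm - mu0u ϱm ϱp pm pp ϱ1 vm u)) +
  ϱ1 * ϱm * ((mu1u ϱm ϱp pm pp ϱ1 vm u + (vm - u)) /
    (mu1u ϱm ϱp pm pp ϱ1 vm u - (vm - u)))

/-- `X = ϱ₊ϱ₋(p₋ − p₊) + (2c_v+1)ϱ₁(ϱ₋p₊ − ϱ₊p₋)`. -/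
def Xu (cv ϱm ϱp pm pp ϱ1 : ℝ) : ℝ :=
  ϱp * ϱm * (pm - pp) + (2 * cv + 1) * ϱ1 * (ϱm * pp - ϱp * pm)

/-- `Z = p₊ + ((ϱ₁−ϱ₊)ϱ₊/ϱ₁)(v₊ − μ₁)²`, with `v₊ = v₋ − u`. -/
def Zu (ϱm ϱp pm pp ϱ1 vm u : ℝ) : ℝ :=
  pp + ((ϱ1 - ϱp) * ϱp / ϱ1) * ((vm - u) - mu1u ϱm ϱp pm pp ϱ1 vm u) ^ 2

/-- The middle pressure `p₁ = (YZ − X)/(Y + ϱ₁R)` with `R = ϱ₋ − ϱ₊`. -/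
def p1u (cv ϱm ϱp pm pp ϱ1 vm u : ℝ) : ℝ :=
  (Yu ϱm ϱp pm pp ϱ1 vm u * Zu ϱm ϱp pm pp ϱ1 vm u - Xu cv ϱm ϱp pm pp ϱ1) /
    (Yu ϱm ϱp pm pp ϱ1 vm u + ϱ1 * (ϱm - ϱp))

/-- The subsolution parameter `ε₁ = (ϱ₁RZ + X)/(ϱ₁(Y + ϱ₁R))` with `R = ϱ₋ − ϱ₊`. -/
def eps1u (cv ϱm ϱp pm pp ϱ1 vm u : ℝ) : ℝ :=
  (ϱ1 * (ϱm - ϱp) * Zu ϱm ϱp pm pp ϱ1 vm u + Xu cv ϱm ϱp pm pp ϱ1) /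
    (ϱ1 * (Yu ϱm ϱp pm pp ϱ1 vm u + ϱ1 * (ϱm - ϱp)))

/-- The second component `β = (ϱ₊v₊ + μ₁(ϱ₁−ϱ₊))/ϱ₁` of the middle velocity,
with `v₊ = v₋ − u`. -/
def betau (ϱm ϱp pm pp ϱ1 vm u : ℝ) : ℝ :=
  (ϱp * (vm - u) + mu1u ϱm ϱp pm pp ϱ1 vm u * (ϱ1 - ϱp)) / ϱ1

/-- The subsolution parameter `ε₂`. -/
def eps2u (cv ϱm ϱp pm pp ϱ1 vm u : ℝ) : ℝ :=
  (1 / (ϱ1 * ϱp)) *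
      ((ϱ1 - ϱp) * (p1u cv ϱm ϱp pm pp ϱ1 vm u + pp) +
        2 * cv * (ϱ1 * pp - ϱp * p1u cv ϱm ϱp pm pp ϱ1 vm u)) +
    eps1u cv ϱm ϱp pm pp ϱ1 vm u *
      (((vm - u) + betau ϱm ϱp pm pp ϱ1 vm u) /
          ((vm - u) - betau ϱm ϱp pm pp ϱ1 vm u) * ((ϱ1 - ϱp) / ϱp) - 1)

/-- **Lemma (signs of `v₋ − μ₀` and `μ₁ − v₊`, case `ϱ₋ < ϱ₊`).** For a
sufficiently large velocity jump `u = v₋ − v₊` (with `v₋` fixed), the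
discriminant `B` is positive, and `v₋ − μ₀ > 0`, `μ₁ − v₊ > 0`. -/
theorem speeds_ordering_large_u
    (ϱm ϱp pm pp ϱ1 vm : ℝ)
    (hϱm : 0 < ϱm) (hϱmp : ϱm < ϱp) (hpm : 0 < pm) (hpp : 0 < pp)
    (hϱ1 : ϱp < ϱ1) :
    ∃ u0 : ℝ, 0 < u0 ∧ ∀ u : ℝ, u0 ≤ u →
      0 < Bu ϱm ϱp pm pp u ∧
      0 < vm - mu0u ϱm ϱp pm pp ϱ1 vm u ∧
      0 < mu1u ϱm ϱp pm pp ϱ1 vm u - (vm - u) := by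
  have hR : ϱm - ϱp < 0 := by linarith
  have hRne : ϱm - ϱp ≠ 0 := ne_of_lt hR
  have h1m : (0:ℝ) < ϱ1 - ϱm := by linarith
  have h1p : (0:ℝ) < ϱ1 - ϱp := by linarith
  set E := |(ϱp - ϱm) * (pp - pm)| with hEdef
  have hE0 : 0 ≤ E := abs_nonneg _
  set c := min (ϱm * ϱp) (min (ϱp * (ϱp - ϱm)) (ϱm * (ϱp - ϱm))) with hcdef
  have hc0 : 0 < c := by
    apply lt_min (by nlinarith)
    exact lt_min (by nlinarith) (by nlinarith)
  have hc1 : c ≤ ϱm * ϱp := min_le_left _ _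
  have hc2 : c ≤ ϱp * (ϱp - ϱm) := le_trans (min_le_right _ _) (min_le_left _ _)
  have hc3 : c ≤ ϱm * (ϱp - ϱm) := le_trans (min_le_right _ _) (min_le_right _ _)
  refine ⟨1 + Real.sqrt (E / c), by positivity, ?_⟩
  intro u hu
  have hs0 : (0:ℝ) ≤ Real.sqrt (E / c) := Real.sqrt_nonneg _
  have hu0 : (0:ℝ) < u := lt_of_lt_of_le (by positivity) hu
  have hsq : Real.sqrt (E / c) ^ 2 = E / c := Real.sq_sqrt (by positivity)
  have hEc : E < c * u ^ 2 := by
    have h1 : E / c < u ^ 2 := by nlinarith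
    calc E = c * (E / c) := by field_simp
    _ < c * u ^ 2 := by exact mul_lt_mul_of_pos_left h1 hc0
  have habs1 : (ϱp - ϱm) * (pp - pm) ≤ E := le_abs_self _
  have habs2 : -E ≤ (ϱp - ϱm) * (pp - pm) := neg_abs_le _
  have hu2 : (0:ℝ) ≤ u ^ 2 := sq_nonneg u
  have hB : 0 < Bu ϱm ϱp pm pp u := by
    have h : c * u ^ 2 ≤ ϱm * ϱp * u ^ 2 := mul_le_mul_of_nonneg_right hc1 hu2
    simp only [Bu]; linarith
  have hB2 : Bu ϱm ϱp pm pp u < ϱp ^ 2 * u ^ 2 := by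
    have h : c * u ^ 2 ≤ ϱp * (ϱp - ϱm) * u ^ 2 := mul_le_mul_of_nonneg_right hc2 hu2
    have h2 : ϱp * (ϱp - ϱm) * u ^ 2 + ϱm * ϱp * u ^ 2 = ϱp ^ 2 * u ^ 2 := by ring
    simp only [Bu]; linarith
  have hB3 : ϱm ^ 2 * u ^ 2 < Bu ϱm ϱp pm pp u := by
    have h : c * u ^ 2 ≤ ϱm * (ϱp - ϱm) * u ^ 2 := mul_le_mul_of_nonneg_right hc3 hu2
    have h2 : ϱm * (ϱp - ϱm) * u ^ 2 + ϱm ^ 2 * u ^ 2 = ϱm * ϱp * u ^ 2 := by ring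
    simp only [Bu]; linarith
  have hk1 : (ϱ1 - ϱp) / (ϱ1 - ϱm) ≤ 1 := by
    rw [div_le_one h1m]; linarith
  have hk0 : 0 ≤ (ϱ1 - ϱp) / (ϱ1 - ϱm) := by positivity
  have hk'1 : 1 ≤ (ϱ1 - ϱm) / (ϱ1 - ϱp) := by
    rw [le_div_iff₀ h1p]; linarith
  -- sqrt bounds
  have hsm0 : Real.sqrt (Bu ϱm ϱp pm pp u * ((ϱ1 - ϱp) / (ϱ1 - ϱm))) < ϱp * u := by
    rw [show ϱp * u = Real.sqrt ((ϱp * u) ^ 2) from (Real.sqrt_sq (by nlinarith)).symm]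
    apply Real.sqrt_lt_sqrt (mul_nonneg hB.le hk0)
    calc Bu ϱm ϱp pm pp u * ((ϱ1 - ϱp) / (ϱ1 - ϱm)) ≤ Bu ϱm ϱp pm pp u * 1 :=
      mul_le_mul_of_nonneg_left hk1 (le_of_lt hB)
    _ < (ϱp * u) ^ 2 := by rw [mul_one]; calc Bu ϱm ϱp pm pp u < ϱp ^ 2 * u ^ 2 := hB2
      _ = (ϱp * u) ^ 2 := by ring
  have hsm1 : ϱm * u < Real.sqrt (Bu ϱm ϱp pm pp u * ((ϱ1 - ϱm) / (ϱ1 - ϱp))) := by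
    have h2 : (ϱm * u) ^ 2 < Bu ϱm ϱp pm pp u * ((ϱ1 - ϱm) / (ϱ1 - ϱp)) := by
      calc (ϱm * u) ^ 2 = ϱm ^ 2 * u ^ 2 := by ring
      _ < Bu ϱm ϱp pm pp u := hB3
      _ = Bu ϱm ϱp pm pp u * 1 := by ring
      _ ≤ _ := mul_le_mul_of_nonneg_left hk'1 (le_of_lt hB)
    calc ϱm * u = Real.sqrt ((ϱm * u) ^ 2) := (Real.sqrt_sq (by positivity)).symm
    _ < _ := Real.sqrt_lt_sqrt (sq_nonneg _) h2
  refine ⟨hB, ?_, ?_⟩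
  · have heq : vm - mu0u ϱm ϱp pm pp ϱ1 vm u =
        (Real.sqrt (Bu ϱm ϱp pm pp u * ((ϱ1 - ϱp) / (ϱ1 - ϱm))) - ϱp * u) / (ϱm - ϱp) := by
      simp only [mu0u]; field_simp; ring
    rw [heq]
    exact div_pos_iff.mpr (Or.inr ⟨by linarith, hR⟩)
  · have heq : mu1u ϱm ϱp pm pp ϱ1 vm u - (vm - u) =
        (ϱm * u - Real.sqrt (Bu ϱm ϱp pm pp u * ((ϱ1 - ϱm) / (ϱ1 - ϱp)))) / (ϱm - ϱp) := by
      simp only [mu1u]; field_simp; ring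
    rw [heq]
    exact div_pos_iff.mpr (Or.inr ⟨by linarith, hR⟩)
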